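/- arXiv:1204.1303 — 5 statements merged into one kernel-verified Lean document; each statement's English description precedes it below -/
import Mathlib

section
/- For every x > 0, lim_{θ → 0⁺} [1 - C(θ·e^{-αH(x)})/C(θ)] = 1 - e^{-cαH(x)}, where c = min{n ∈ ℕ : a_n > 0}. That is, the extended Weibull distribution with parameter cα is the limiting case of the EWPS class as θ → 0⁺. -/
/-! Since `a n = 0` below `c` and `a c > 0`, the Taylor estimate for the analytic sum `C` gives
`C t ~ a c * t ^ c` as `t → 0`. Hence `C (θ s) / C θ → s ^ c` for every fixed `s`, in particular
for `s = exp (-α H x)`. -/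

open Real Set Filter Topology Asymptotics FormalMultilinearSeries
open scoped ENNReal

section PowerSeries

variable {𝕜 : Type*} [NontriviallyNormedField 𝕜] {a : ℕ → 𝕜}

theorem nnnorm_le_ofScalars_radius_of_summable {x : 𝕜}
    (hx : Summable fun n => a n * x ^ n) :
    (‖x‖₊ : ℝ≥0∞) ≤ (ofScalars 𝕜 a).radius := by
  refine (ofScalars 𝕜 a).le_radius_of_tendsto (l := 0) ?_
  simpa [ofScalars_norm, norm_mul, norm_pow] using hx.tendsto_atTop_zero.norm

theorem ofScalars_partialSum_succ_of_forall_lt_eq_zero {c : ℕ} (ha : ∀ n < c, a n = 0) (y : 𝕜) :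
    (ofScalars 𝕜 a).partialSum (c + 1) y = a c * y ^ c := by
  rw [partialSum, Finset.sum_range_succ, Finset.sum_eq_zero fun n hn => ?_]
  · simp [mul_comm]
  · simp [ha n (Finset.mem_range.1 hn)]

theorem ofScalarsSum_isEquivalent_leading_term [CompleteSpace 𝕜] {c : ℕ}
    (ha : ∀ n < c, a n = 0) (hac : a c ≠ 0) (hr : 0 < (ofScalars 𝕜 a).radius) :
    ofScalarsSum a ~[𝓝 0] fun y => a c * y ^ c := by
  have hf : HasFPowerSeriesAt (ofScalarsSum a) (ofScalars 𝕜 a) 0 :=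
    ((ofScalars 𝕜 a).hasFPowerSeriesOnBall hr).hasFPowerSeriesAt
  have hO := hf.isBigO_sub_partialSum_pow (c + 1)
  simp only [zero_add, ofScalars_partialSum_succ_of_forall_lt_eq_zero ha] at hO
  have hsmall : (fun y : 𝕜 => ‖y‖ ^ (c + 1)) =o[𝓝 0] fun y => a c * y ^ c :=
    (isLittleO_norm_right.mp <| (isLittleO_norm_pow_norm_pow c.lt_succ_self).congr_right
      fun y => (norm_pow y c).symm).const_mul_right hac
  exact hO.trans_isLittleO hsmall

end PowerSeries

theorem tendsto_comp_mul_div_of_isEquivalent_const_mul_pow {𝕜 : Type*} [NormedField 𝕜]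
    {f : 𝕜 → 𝕜} {b : 𝕜} {c : ℕ} (hf : f ~[𝓝 0] fun y => b * y ^ c) (hb : b ≠ 0) (s : 𝕜) :
    Tendsto (fun θ => f (θ * s) / f θ) (𝓝[≠] 0) (𝓝 (s ^ c)) := by
  have hscale : Tendsto (fun θ : 𝕜 => θ * s) (𝓝[≠] 0) (𝓝 0) := by
    simpa using ((continuous_mul_const s).tendsto 0).mono_left nhdsWithin_le_nhds
  have hratio := (hf.comp_tendsto hscale).div (hf.mono nhdsWithin_le_nhds)
  refine hratio.symm.tendsto_nhds (tendsto_const_nhds.congr' ?_)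
  filter_upwards [self_mem_nhdsWithin] with θ (hθ : θ ≠ 0)
  simp only [Function.comp_apply, Pi.div_apply, mul_pow]
  field_simp

theorem ewps_limit_theta_to_zero_general (H : ℝ → ℝ) (a : ℕ → ℝ) (α : ℝ)
    (ha : ∀ n, 0 ≤ a n) (hex : ∃ n, 0 < a n)
    (r : ℝ) (hr : 0 < r)
    (hsum : ∀ t : ℝ, |t| < r → Summable (fun n : ℕ => a n * t ^ n))
    (x : ℝ) :
    Tendsto
      (fun θ : ℝ =>
        1 - (∑' n : ℕ, a n * (θ * exp (-α * H x)) ^ n) / (∑' n : ℕ, a n * θ ^ n))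
      (𝓝[>] 0)
      (𝓝 (1 - exp (-((sInf {n : ℕ | 0 < a n} : ℕ) * α * H x)))) := by
  set c := sInf {n : ℕ | 0 < a n}
  have hac : 0 < a c := Nat.sInf_mem hex
  have hlt : ∀ n < c, a n = 0 := fun n hn =>
    le_antisymm (not_lt.1 (Nat.notMem_of_lt_sInf hn)) (ha n)
  have hradius : 0 < (ofScalars ℝ a).radius :=
    lt_of_lt_of_le (by simpa using hr.ne') <| nnnorm_le_ofScalars_radius_of_summable <|
      hsum (r / 2) (by rw [abs_of_pos (half_pos hr)]; linarith)
  have hlim := tendsto_comp_mul_div_of_isEquivalent_const_mul_pow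
    (ofScalarsSum_isEquivalent_leading_term hlt hac.ne' hradius) hac.ne' (exp (-α * H x))
  have hexp : exp (-α * H x) ^ c = exp (-(c * α * H x)) := by
    rw [← Real.exp_nat_mul]
    congr 1
    ring
  simpa only [ofScalars_sum_eq, smul_eq_mul, hexp] using
    (hlim.mono_left (nhdsGT_le_nhdsNE 0)).const_sub 1

/-- The extended Weibull distribution with parameter `c·α`, where
`c = min {n : a n > 0}`, is the limiting case of the EWPS class as `θ → 0⁺`:
for every `x > 0`, `1 - C(θ e^{-αH(x)})/C(θ) → 1 - e^{-cαH(x)}`. -/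
theorem ewps_limit_theta_to_zero (H : ℝ → ℝ) (a : ℕ → ℝ) (α : ℝ) (hα : 0 < α)
    (hH : ∀ x ∈ Ioi (0:ℝ), 0 ≤ H x)
    (ha : ∀ n, 0 ≤ a n) (ha0 : a 0 = 0) (hex : ∃ n, 0 < a n)
    (r : ℝ) (hr : 0 < r)
    (hsum : ∀ t : ℝ, |t| < r → Summable (fun n : ℕ => a n * t ^ n))
    (x : ℝ) (hx : 0 < x) :
    Tendsto
      (fun θ : ℝ =>
        1 - (∑' n : ℕ, a n * (θ * exp (-α * H x)) ^ n) / (∑' n : ℕ, a n * θ ^ n))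
      (𝓝[>] 0)
      (𝓝 (1 - exp (-((sInf {n : ℕ | 0 < a n} : ℕ) * α * H x)))) :=
  ewps_limit_theta_to_zero_general H a α ha hex r hr hsum x
end

section
/- If N has probability mass function P(N = n) = a_n θ^n / C(θ) for n ≥ 1, and given N = n, X₍₁₎ is the minimum of n i.i.d. random variables each with cdf G(x) = 1 - e^{-αH(x)}, then the marginal cdf of X₍₁₎ is F(x) = 1 - C(θ e^{-αH(x)})/C(θ). -/
open Real Set Filter Topology MeasureTheory

/-!
Splitting `{X ≤ x}` along the fibres of `N`, the joint law gives
`P(X ≤ x) = ∑ₙ aₙ θⁿ (1 - e^{-nαH(x)}) / C(θ)`, where the empty fibre `N = 0` matches `a₀ = 0`.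
Since `e^{-nαH(x)} = (e^{-αH(x)})ⁿ` with `e^{-αH(x)} ∈ (0, 1]`, the series splits into
`(C(θ) - C(θ e^{-αH(x)})) / C(θ)`.
-/

theorem measure_eq_tsum_inter_preimage_singleton {α β : Type*} [MeasurableSpace α]
    [MeasurableSpace β] [Countable β] [MeasurableSingletonClass β] (μ : Measure α)
    {f : α → β} (hf : Measurable f) {s : Set α} (hs : MeasurableSet s) :
    μ s = ∑' b, μ (s ∩ f ⁻¹' {b}) := by
  rw [← measure_iUnion, ← inter_iUnion, ← preimage_iUnion, iUnion_of_singleton, preimage_univ,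
    inter_univ]
  · exact fun b c hbc => (disjoint_singleton.mpr hbc).preimage f |>.inter_left' s |>.inter_right' s
  · exact fun b => hs.inter (hf (measurableSet_singleton b))

theorem summable_mul_pow_of_le {a : ℕ → ℝ} {θ ψ : ℝ} (ha : ∀ n, 0 ≤ a n) (hψ : 0 ≤ ψ)
    (hψθ : ψ ≤ θ) (hsum : Summable fun n => a n * θ ^ n) : Summable fun n => a n * ψ ^ n :=
  hsum.of_nonneg_of_le (fun n => mul_nonneg (ha n) (pow_nonneg hψ n))
    fun n => mul_le_mul_of_nonneg_left (pow_le_pow_left₀ hψ hψθ n) (ha n)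

theorem hasSum_mul_pow_mul_one_sub_pow {a : ℕ → ℝ} {θ E : ℝ} (ha : ∀ n, 0 ≤ a n)
    (hθ : 0 ≤ θ) (hE0 : 0 ≤ E) (hE1 : E ≤ 1) (hsum : Summable fun n => a n * θ ^ n) :
    HasSum (fun n => a n * θ ^ n * (1 - E ^ n))
      (∑' n, a n * θ ^ n - ∑' n, a n * (θ * E) ^ n) := by
  have hsumE := summable_mul_pow_of_le ha (mul_nonneg hθ hE0) (mul_le_of_le_one_right hθ hE1) hsum
  exact (hsum.hasSum.sub hsumE.hasSum).congr_fun fun n => by ring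

theorem ENNReal.tsum_ofReal_eq_of_hasSum {ι : Type*} {f : ι → ℝ} {r : ℝ} (hf : HasSum f r)
    (hf_nonneg : ∀ i, 0 ≤ f i) : ∑' i, ENNReal.ofReal (f i) = ENNReal.ofReal r := by
  rw [← ENNReal.ofReal_tsum_of_nonneg hf_nonneg hf.summable, hf.tsum_eq]

theorem ewps_compounding_general {Ω : Type*} [MeasurableSpace Ω]
    (P : Measure Ω)
    (N : Ω → ℕ) (X : Ω → ℝ) (hN : Measurable N) (hX : Measurable X)
    (H : ℝ → ℝ) (a : ℕ → ℝ) (α θ : ℝ)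
    (hα : 0 < α) (hθ : 0 < θ) (ha : ∀ n, 0 ≤ a n) (ha0 : a 0 = 0)
    (hHnn : ∀ y > (0:ℝ), 0 ≤ H y)
    (hsum : Summable (fun n : ℕ => a n * θ ^ n))
    (hCpos : 0 < ∑' n : ℕ, a n * θ ^ n)
    (hN1 : ∀ ω, 1 ≤ N ω)
    (x : ℝ) (hx : 0 < x)
    (hjoint : ∀ n : ℕ, 1 ≤ n →
        P {ω | X ω ≤ x ∧ N ω = n} =
          ENNReal.ofReal ((a n * θ ^ n / (∑' m : ℕ, a m * θ ^ m)) *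
            (1 - exp (-((n : ℝ) * α * H x))))) :
    P {ω | X ω ≤ x} =
      ENNReal.ofReal
        (1 - (∑' n : ℕ, a n * (θ * exp (-α * H x)) ^ n) / (∑' n : ℕ, a n * θ ^ n)) := by
  set C := ∑' n, a n * θ ^ n
  set E := exp (-α * H x)
  have hE0 : 0 ≤ E := (exp_pos _).le
  have hE1 : E ≤ 1 :=
    exp_le_one_iff.mpr (mul_nonpos_of_nonpos_of_nonneg (neg_nonpos.mpr hα.le) (hHnn x hx))
  have hexp (n : ℕ) : exp (-((n : ℝ) * α * H x)) = E ^ n := by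
    rw [← exp_nat_mul]
    congr 1
    ring
  have hfiber (n : ℕ) :
      P ({ω | X ω ≤ x} ∩ N ⁻¹' {n}) = ENNReal.ofReal (a n * θ ^ n / C * (1 - E ^ n)) := by
    rcases n with _ | n
    · have hempty : {ω | X ω ≤ x} ∩ N ⁻¹' {0} = ∅ :=
        eq_empty_of_forall_notMem fun ω hω => Nat.one_le_iff_ne_zero.mp (hN1 ω) hω.2
      simp [hempty, ha0]
    · rw [← hexp]
      exact hjoint (n + 1) n.succ_pos
  have hterm_nonneg (n : ℕ) : 0 ≤ a n * θ ^ n / C * (1 - E ^ n) :=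
    mul_nonneg (div_nonneg (mul_nonneg (ha n) (pow_nonneg hθ.le n)) hCpos.le)
      (sub_nonneg.mpr (pow_le_one₀ hE0 hE1))
  have hseries : HasSum (fun n => a n * θ ^ n / C * (1 - E ^ n))
      (1 - (∑' n, a n * (θ * E) ^ n) / C) := by
    have h := (hasSum_mul_pow_mul_one_sub_pow ha hθ.le hE0 hE1 hsum).div_const C
    rw [sub_div, div_self hCpos.ne'] at h
    exact h.congr_fun fun n => by ring
  rw [measure_eq_tsum_inter_preimage_singleton P hN (s := {ω | X ω ≤ x}) (hX measurableSet_Iic),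
    tsum_congr hfiber]
  exact ENNReal.tsum_ofReal_eq_of_hasSum hseries hterm_nonneg

/-- Compounding construction: if `P(N = n) = a_n θ^n / C(θ)` for `n ≥ 1` and the joint law
satisfies `P(X ≤ x, N = n) = (a_n θ^n / C(θ)) (1 - e^{-nαH(x)})`, then the marginal cdf of
`X` is `F(x) = 1 - C(θ e^{-αH(x)})/C(θ)`. -/
theorem ewps_compounding {Ω : Type*} [MeasurableSpace Ω]
    (P : Measure Ω) [IsProbabilityMeasure P]
    (N : Ω → ℕ) (X : Ω → ℝ) (hN : Measurable N) (hX : Measurable X)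
    (H : ℝ → ℝ) (a : ℕ → ℝ) (α θ : ℝ)
    (hα : 0 < α) (hθ : 0 < θ) (ha : ∀ n, 0 ≤ a n) (ha0 : a 0 = 0)
    (hHnn : ∀ y > (0:ℝ), 0 ≤ H y)
    (hsum : Summable (fun n : ℕ => a n * θ ^ n))
    (hCpos : 0 < ∑' n : ℕ, a n * θ ^ n)
    (hN1 : ∀ ω, 1 ≤ N ω)
    (hpmf : ∀ n : ℕ, 1 ≤ n →
        P {ω | N ω = n} = ENNReal.ofReal (a n * θ ^ n / (∑' m : ℕ, a m * θ ^ m)))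
    (x : ℝ) (hx : 0 < x)
    (hjoint : ∀ n : ℕ, 1 ≤ n →
        P {ω | X ω ≤ x ∧ N ω = n} =
          ENNReal.ofReal ((a n * θ ^ n / (∑' m : ℕ, a m * θ ^ m)) *
            (1 - exp (-((n : ℝ) * α * H x))))) :
    P {ω | X ω ≤ x} =
      ENNReal.ofReal
        (1 - (∑' n : ℕ, a n * (θ * exp (-α * H x)) ^ n) / (∑' n : ℕ, a n * θ ^ n)) :=
  ewps_compounding_general P N X hN hX H a α θ hα hθ ha ha0 hHnn hsum hCpos hN1 x hx hjoint
end

section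
/- For the Pareto Poisson distribution and nα > r, the r-th moment is E[X^r] = (α k^r / (e^θ - 1)) · Σ_{n=1}^∞ θ^n / ((n-1)! · (nα - r)). -/
open Real Set Filter Topology MeasureTheory

open scoped Nat

/-!
Write `u = k / x`. Since `θ u^α e^{θ u^α} = ∑ θ^{n+1} u^{(n+1)α} / n!`, the integrand
`x^r f(x)` equals `α k^r / (e^θ - 1) · ∑ θ^{n+1}/n! · u^{(n+1)α - r} / x`. All terms are
nonnegative, so the integral may be taken termwise, and each term is a Pareto-type integral
`∫_k^∞ (k/x)^q dx/x = 1/q` with `q = (n+1)α - r > 0`.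
-/

lemma MeasureTheory.integral_tsum_of_nonneg {α ι : Type*} [MeasurableSpace α] {μ : Measure α}
    [Countable ι] {F : ι → α → ℝ} (hF_int : ∀ i, Integrable (F i) μ)
    (hF_nonneg : ∀ i, 0 ≤ᵐ[μ] F i) (hF_sum : Summable fun i ↦ ∫ a, F i a ∂μ) :
    ∫ a, ∑' i, F i a ∂μ = ∑' i, ∫ a, F i a ∂μ := by
  refine (integral_tsum_of_summable_integral_norm hF_int ?_).symm
  refine hF_sum.congr fun i ↦ integral_congr_ae ?_
  filter_upwards [hF_nonneg i] with a ha
  exact (Real.norm_of_nonneg ha).symm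

lemma Real.div_rpow_div_eq_mul_rpow_neg_sub_one {k x : ℝ} (hk : 0 ≤ k) (hx : 0 < x) (q : ℝ) :
    (k / x) ^ q / x = k ^ q * x ^ (-q - 1) := by
  rw [div_rpow hk hx.le, rpow_sub hx, rpow_neg hx.le, rpow_one]
  field_simp

lemma integrableOn_Ioi_div_rpow_div {k q : ℝ} (hk : 0 < k) (hq : 0 < q) :
    IntegrableOn (fun x ↦ (k / x) ^ q / x) (Ioi k) := by
  have h : IntegrableOn (fun x ↦ k ^ q * x ^ (-q - 1)) (Ioi k) :=
    (integrableOn_Ioi_rpow_of_lt (by linarith) hk).const_mul _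
  exact h.congr_fun
    (fun x hx ↦ (div_rpow_div_eq_mul_rpow_neg_sub_one hk.le (hk.trans hx) q).symm)
    measurableSet_Ioi

lemma integral_Ioi_div_rpow_div {k q : ℝ} (hk : 0 < k) (hq : 0 < q) :
    ∫ x in Ioi k, (k / x) ^ q / x = q⁻¹ := by
  rw [setIntegral_congr_fun measurableSet_Ioi
      fun x hx ↦ div_rpow_div_eq_mul_rpow_neg_sub_one hk.le (hk.trans hx) q,
    integral_const_mul, integral_Ioi_rpow_of_lt (by linarith) hk, sub_add_cancel, rpow_neg hk.le]
  field_simp [(rpow_pos_of_pos hk q).ne']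

lemma mul_exp_eq_tsum (y : ℝ) : y * exp y = ∑' n : ℕ, y ^ (n + 1) / n ! := by
  rw [exp_eq_exp_ℝ, NormedSpace.exp_eq_tsum_div, ← tsum_mul_left]
  simp only [pow_succ', mul_div_assoc]

lemma summable_pow_succ_div_factorial_div {θ c : ℝ} {q : ℕ → ℝ} (hθ : 0 ≤ θ) (hc : 0 < c)
    (hq : ∀ n, c ≤ q n) : Summable fun n : ℕ ↦ θ ^ (n + 1) / n ! / q n := by
  have hbound : Summable fun n : ℕ ↦ θ / c * (θ ^ n / n !) :=
    (summable_pow_div_factorial θ).mul_left _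
  refine hbound.of_nonneg_of_le (fun n ↦ by have := hc.trans_le (hq n); positivity) fun n ↦ ?_
  calc θ ^ (n + 1) / n ! / q n ≤ θ ^ (n + 1) / n ! / c :=
        div_le_div_of_nonneg_left (by positivity) hc (hq n)
    _ = θ / c * (θ ^ n / n !) := by ring

lemma paretoPoisson_moment_integrand_eq_tsum {k α θ x : ℝ} (r : ℕ) (hk : 0 < k) (hx : 0 < x) :
    x ^ r * (θ * α * k ^ α * exp (θ * (k / x) ^ α) / ((exp θ - 1) * x ^ (α + 1)))
      = α * k ^ r / (exp θ - 1) *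
          ∑' n : ℕ, θ ^ (n + 1) / n ! * ((k / x) ^ ((n + 1) * α - r) / x) := by
  have hu : 0 < k / x := div_pos hk hx
  have hterm : ∀ n : ℕ, θ ^ (n + 1) / n ! * ((k / x) ^ ((n + 1) * α - r) / x)
      = (θ * (k / x) ^ α) ^ (n + 1) / n ! * ((k / x) ^ r)⁻¹ / x := fun n ↦ by
    rw [rpow_sub hu, rpow_natCast, mul_pow, ← rpow_natCast ((k / x) ^ α), ← rpow_mul hu.le]
    push_cast
    ring_nf
  rw [tsum_congr hterm, tsum_div_const, tsum_mul_right, ← mul_exp_eq_tsum, div_rpow hk.le hx.le,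
    rpow_add_one hx.ne']
  have hxα : x ^ α ≠ 0 := (rpow_pos_of_pos hx α).ne'
  have hkα : k ^ α ≠ 0 := (rpow_pos_of_pos hk α).ne'
  rw [div_pow]
  field_simp

theorem pareto_poisson_moments_general (k α θ : ℝ) (r : ℕ)
    (hk : 0 < k) (hθ : 0 < θ) (hra : (r : ℝ) < α) :
    ∫ x in Ici k,
        (x : ℝ) ^ r *
          (θ * α * k ^ α * exp (θ * (k / x) ^ α) / ((exp θ - 1) * x ^ (α + 1)))
      = α * k ^ r / (exp θ - 1) *
          ∑' n : ℕ, θ ^ (n + 1) / ((n.factorial : ℝ) * (((n : ℝ) + 1) * α - r)) := by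
  have hq : ∀ n : ℕ, α - r ≤ (n + 1) * α - r := fun n ↦ by
    have : (0 : ℝ) ≤ n * α := mul_nonneg n.cast_nonneg (r.cast_nonneg.trans hra.le)
    linarith
  have hq_pos : ∀ n : ℕ, 0 < (n + 1) * α - r := fun n ↦ (sub_pos.2 hra).trans_le (hq n)
  set F : ℕ → ℝ → ℝ := fun n x ↦ θ ^ (n + 1) / n ! * ((k / x) ^ ((n + 1) * α - r) / x)
  have hF_int : ∀ n, IntegrableOn (F n) (Ioi k) := fun n ↦
    (integrableOn_Ioi_div_rpow_div hk (hq_pos n)).const_mul _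
  have hF_nonneg : ∀ n, 0 ≤ᵐ[volume.restrict (Ioi k)] F n := fun n ↦ by
    filter_upwards [ae_restrict_mem measurableSet_Ioi] with x hx
    have hx₀ : 0 < x := hk.trans hx
    positivity
  have hF_integral :
      ∀ n, ∫ x in Ioi k, F n x = θ ^ (n + 1) / n ! / ((n + 1) * α - r) := fun n ↦ by
    rw [integral_const_mul, integral_Ioi_div_rpow_div hk (hq_pos n), ← div_eq_mul_inv]
  calc _ = ∫ x in Ioi k, α * k ^ r / (exp θ - 1) * ∑' n, F n x := by
        rw [integral_Ici_eq_integral_Ioi]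
        exact setIntegral_congr_fun measurableSet_Ioi fun x hx ↦
          paretoPoisson_moment_integrand_eq_tsum r hk (hk.trans hx)
    _ = α * k ^ r / (exp θ - 1) * ∑' n : ℕ, θ ^ (n + 1) / n ! / ((n + 1) * α - r) := by
        rw [integral_const_mul, integral_tsum_of_nonneg hF_int hF_nonneg, tsum_congr hF_integral]
        exact (summable_pow_succ_div_factorial_div hθ.le (sub_pos.2 hra) hq).congr
          fun n ↦ (hF_integral n).symm
    _ = _ := by simp only [div_div]

/-- For the Pareto Poisson distribution with `nα > r` for all `n ≥ 1` (i.e. `α > r`),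
the `r`-th moment is
`E[X^r] = (α k^r/(e^θ - 1)) ∑_{n≥1} θ^n/((n-1)! (nα - r))`. -/
theorem pareto_poisson_moments (k α θ : ℝ) (r : ℕ)
    (hk : 0 < k) (hα : 0 < α) (hθ : 0 < θ) (hra : (r : ℝ) < α) :
    ∫ x in Ici k,
        (x : ℝ) ^ r *
          (θ * α * k ^ α * exp (θ * (k / x) ^ α) / ((exp θ - 1) * x ^ (α + 1)))
      = α * k ^ r / (exp θ - 1) *
          ∑' n : ℕ, θ ^ (n + 1) / ((n.factorial : ℝ) * (((n : ℝ) + 1) * α - r)) :=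
  pareto_poisson_moments_general k α θ r hk hθ hra
end

section
/- For X with Pareto Poisson density, the mean E[X] = (αk/(e^θ - 1)) Σ_{n=1}^∞ θ^n / ((n-1)!(nα - 1)), valid when α > 1. -/
open Real Set Filter Topology MeasureTheory

/-!
Up to a constant, `x · f(x)` is `x^(-α) exp (θ (k/x)^α) = ∑ θⁿ kⁿᵅ x^(-(n+1)α) / n!`, each term
a constant multiple of `x^(-(n+1)α)`, whose integral over `(k, ∞)` is `k^(1-(n+1)α) / ((n+1)α - 1)`
because `α > 1`; the integrals of the absolute values are dominated by the exponential series
of `|θ|`, so summation and integration may be interchanged.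
-/

lemma integral_Ioi_rpow_neg {k s : ℝ} (hk : 0 < k) (hs : 1 < s) :
    ∫ x in Ioi k, x ^ (-s) = k ^ (1 - s) / (s - 1) := by
  rw [integral_Ioi_rpow_of_lt (by linarith) hk, neg_add_eq_sub, ← neg_div_neg_eq, neg_neg,
    neg_sub]

section ExpRpowSeries

variable {k α : ℝ}

lemma one_lt_natCast_add_one_mul (hα : 1 < α) (n : ℕ) : 1 < ((n : ℝ) + 1) * α := by
  nlinarith [n.cast_nonneg (α := ℝ)]

noncomputable def expRpowTerm (k α θ : ℝ) (n : ℕ) (x : ℝ) : ℝ :=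
  θ ^ n / n.factorial * k ^ (n * α) * x ^ (-((n + 1) * α))

lemma hasSum_expRpowTerm (θ : ℝ) (hk : 0 ≤ k) {x : ℝ} (hx : 0 < x) :
    HasSum (fun n => expRpowTerm k α θ n x) (x ^ (-α) * exp (θ * (k / x) ^ α)) := by
  have hterm (n : ℕ) :
      expRpowTerm k α θ n x = x ^ (-α) * ((θ * (k / x) ^ α) ^ n / n.factorial) := by
    have hpow : ((k / x) ^ α) ^ n = k ^ (n * α) * x ^ (-(n * α)) := by
      rw [← rpow_natCast, ← rpow_mul (div_nonneg hk hx.le), div_rpow hk hx.le, rpow_neg hx.le,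
        mul_comm α, div_eq_mul_inv]
    have hx' : x ^ (-((n + 1) * α)) = x ^ (-α) * x ^ (-(n * α)) := by
      rw [← rpow_add hx]; ring_nf
    rw [expRpowTerm, mul_pow, hpow, hx']
    ring
  simp only [hterm]
  rw [Real.exp_eq_exp_ℝ]
  exact (NormedSpace.expSeries_div_hasSum_exp (𝔸 := ℝ) _).mul_left _

variable (θ : ℝ)

lemma integral_expRpowTerm (hk : 0 < k) (hα : 1 < α) (n : ℕ) :
    ∫ x in Ioi k, expRpowTerm k α θ n x
      = k ^ (1 - α) * (θ ^ n / (n.factorial * ((n + 1) * α - 1))) := by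
  have hkpow : k ^ (n * α) * k ^ (1 - (n + 1) * α) = k ^ (1 - α) := by
    rw [← rpow_add hk]; ring_nf
  simp only [expRpowTerm]
  rw [integral_const_mul, integral_Ioi_rpow_neg hk (one_lt_natCast_add_one_mul hα n), ← hkpow]
  field_simp

lemma norm_expRpowTerm (hk : 0 ≤ k) (n : ℕ) {x : ℝ} (hx : 0 < x) :
    ‖expRpowTerm k α θ n x‖ = expRpowTerm k α |θ| n x := by
  simp only [expRpowTerm, norm_mul, norm_div, norm_pow, Real.norm_eq_abs, Nat.abs_cast,
    abs_of_nonneg (rpow_nonneg hk _), abs_of_pos (rpow_pos_of_pos hx _)]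

lemma summable_integral_norm_expRpowTerm (hk : 0 < k) (hα : 1 < α) :
    Summable fun n => ∫ x in Ioi k, ‖expRpowTerm k α θ n x‖ := by
  have hnorm (n : ℕ) : ∫ x in Ioi k, ‖expRpowTerm k α θ n x‖
      = k ^ (1 - α) * (|θ| ^ n / (n.factorial * ((n + 1) * α - 1))) := by
    rw [← integral_expRpowTerm |θ| hk hα]
    exact setIntegral_congr_fun measurableSet_Ioi fun x hx =>
      norm_expRpowTerm θ hk.le n (hk.trans hx)
  simp only [hnorm]
  refine Summable.mul_left _ <| Summable.of_nonneg_of_le (fun n => ?_) (fun n => ?_)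
    ((Real.summable_pow_div_factorial |θ|).div_const (α - 1))
  · have := sub_pos.2 (one_lt_natCast_add_one_mul hα n)
    positivity
  · rw [div_div]
    gcongr
    nlinarith [n.cast_nonneg (α := ℝ)]

theorem integral_Ioi_rpow_neg_mul_exp_rpow (hk : 0 < k) (hα : 1 < α) :
    ∫ x in Ioi k, x ^ (-α) * exp (θ * (k / x) ^ α)
      = k ^ (1 - α) * ∑' n : ℕ, θ ^ n / (n.factorial * ((n + 1) * α - 1)) := by
  have hintegrable (n : ℕ) : IntegrableOn (expRpowTerm k α θ n) (Ioi k) :=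
    (integrableOn_Ioi_rpow_of_lt (by linarith [one_lt_natCast_add_one_mul hα n]) hk).const_mul _
  rw [← tsum_mul_left, ← tsum_congr (integral_expRpowTerm θ hk hα),
    integral_tsum_of_summable_integral_norm hintegrable
      (summable_integral_norm_expRpowTerm θ hk hα)]
  exact setIntegral_congr_fun measurableSet_Ioi fun x hx =>
    ((hasSum_expRpowTerm θ hk.le (hk.trans hx)).tsum_eq).symm

end ExpRpowSeries

theorem pareto_poisson_mean_general (k α θ : ℝ)
    (hk : 0 < k) (hα : 1 < α) :
    ∫ x in Ici k,
        x * (θ * α * k ^ α * exp (θ * (k / x) ^ α) / ((exp θ - 1) * x ^ (α + 1)))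
      = α * k / (exp θ - 1) *
          ∑' n : ℕ, θ ^ (n + 1) / ((n.factorial : ℝ) * (((n : ℝ) + 1) * α - 1)) := by
  have hintegrand : ∀ x ∈ Ioi k,
      x * (θ * α * k ^ α * exp (θ * (k / x) ^ α) / ((exp θ - 1) * x ^ (α + 1)))
        = θ * α * k ^ α / (exp θ - 1) * (x ^ (-α) * exp (θ * (k / x) ^ α)) := by
    intro x hxk
    have hx : 0 < x := hk.trans hxk
    rw [rpow_neg hx.le, rpow_add hx, rpow_one]
    field_simp
  have hcoef : θ * α * k ^ α / (exp θ - 1) * k ^ (1 - α) = α * k / (exp θ - 1) * θ := by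
    rw [mul_div_right_comm, mul_assoc, ← rpow_add hk, add_sub_cancel, rpow_one]
    ring
  rw [integral_Ici_eq_integral_Ioi, setIntegral_congr_fun measurableSet_Ioi hintegrand,
    integral_const_mul, integral_Ioi_rpow_neg_mul_exp_rpow θ hk hα, ← mul_assoc, hcoef,
    mul_assoc, ← tsum_mul_left]
  congr 2 with n
  rw [pow_succ]
  ring

/-- For `X` with the Pareto Poisson density and `α > 1`, the mean is
`E[X] = (αk/(e^θ - 1)) ∑_{n≥1} θ^n/((n-1)!(nα - 1))`. -/
theorem pareto_poisson_mean (k α θ : ℝ)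
    (hk : 0 < k) (hα : 1 < α) (hθ : 0 < θ) :
    ∫ x in Ici k,
        x * (θ * α * k ^ α * exp (θ * (k / x) ^ α) / ((exp θ - 1) * x ^ (α + 1)))
      = α * k / (exp θ - 1) *
          ∑' n : ℕ, θ ^ (n + 1) / ((n.factorial : ℝ) * (((n : ℝ) + 1) * α - 1)) :=
  pareto_poisson_mean_general k α θ hk hα
end

section
/- The conditional distribution of N given X₍₁₎ = x in the EWPS compounding construction has probability mass function g(z|x) = z a_z θ^{z-1} e^{-α(z-1)H(x)} / C'(θ e^{-αH(x)}), and its expectation is E[N | X₍₁₎ = x] = 1 + θ e^{-αH(x)} C''(θ e^{-αH(x)})/C'(θ e^{-αH(x)}). -/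
open Real Set Filter Topology

/-! With `y = θ e^{-αH(x)}` one has `θ^{z-1} e^{-α(z-1)H(x)} = y^{z-1}`, so the conditional law
of `N` is the size-biased power-series law `z a_z y^{z-1} / C'(y)`; the joint density over the
marginal cancels `α h(x) y / C(θ)`. Its mean follows from `z² = z(z-1) + z`, which splits
`∑ z² a_z y^{z-1}` into `y C''(y) + C'(y)`. -/

theorem pow_mul_exp_neg_mul_nat_mul (θ α t : ℝ) (n : ℕ) :
    θ ^ n * exp (-(α * n * t)) = (θ * exp (-α * t)) ^ n := by
  rw [mul_pow, ← exp_nat_mul]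
  ring_nf

-- Holds also at `z = 0`, where `z - 1` truncates but the factor `z` kills both sides.
theorem mul_pow_pred_mul_exp_eq (a : ℕ → ℝ) (θ α t : ℝ) (z : ℕ) :
    (z : ℝ) * a z * θ ^ (z - 1) * exp (-(α * ((z : ℝ) - 1) * t)) =
      z * a z * (θ * exp (-α * t)) ^ (z - 1) := by
  rcases Nat.eq_zero_or_pos z with rfl | hz
  · simp
  · rw [mul_assoc _ (θ ^ _), ← Nat.cast_pred hz, pow_mul_exp_neg_mul_nat_mul]

theorem hasSum_mul_mul_pow_pred {R : Type*} [CommRing R] [TopologicalSpace R]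
    [IsTopologicalRing R] {a : ℕ → R} {y d₁ d₂ : R}
    (h₁ : HasSum (fun n : ℕ => (n : R) * a n * y ^ (n - 1)) d₁)
    (h₂ : HasSum (fun n : ℕ => (n : R) * ((n : R) - 1) * a n * y ^ (n - 2)) d₂) :
    HasSum (fun n : ℕ => (n : R) * ((n : R) * a n * y ^ (n - 1))) (y * d₂ + d₁) := by
  have h : (fun n : ℕ => (n : R) * ((n : R) * a n * y ^ (n - 1))) = fun n : ℕ =>
      y * ((n : R) * ((n : R) - 1) * a n * y ^ (n - 2)) + (n : R) * a n * y ^ (n - 1) := by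
    funext n
    match n with
    | 0 => simp
    | 1 => simp
    | n + 2 =>
      simp only [Nat.add_sub_cancel, show n + 2 - 1 = n + 1 from rfl]
      push_cast
      ring
  rw [h]
  exact (h₂.mul_left y).add h₁

theorem ewps_conditional_N_general (H h : ℝ → ℝ) (a : ℕ → ℝ) (α θ : ℝ)
    (hα : 0 < α) (hθ : 0 < θ)
    (x : ℝ) (hhx : 0 < h x)
    (hCθ : 0 < ∑' n : ℕ, a n * θ ^ n)
    (hsumCp : Summable (fun n : ℕ => (n : ℝ) * a n * (θ * exp (-α * H x)) ^ (n - 1)))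
    (hCp : 0 < ∑' n : ℕ, (n : ℝ) * a n * (θ * exp (-α * H x)) ^ (n - 1))
    (hsumCpp : Summable (fun n : ℕ =>
        (n : ℝ) * ((n : ℝ) - 1) * a n * (θ * exp (-α * H x)) ^ (n - 2))) :
    (∀ z : ℕ, 1 ≤ z →
      (α * z * a z * θ ^ z * h x * exp (-(α * z * H x)) / (∑' n : ℕ, a n * θ ^ n)) /
        (θ * α * h x * exp (-α * H x) *
          (∑' n : ℕ, (n : ℝ) * a n * (θ * exp (-α * H x)) ^ (n - 1)) /
          (∑' n : ℕ, a n * θ ^ n))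
      = (z : ℝ) * a z * θ ^ (z - 1) * exp (-(α * ((z : ℝ) - 1) * H x)) /
          (∑' n : ℕ, (n : ℝ) * a n * (θ * exp (-α * H x)) ^ (n - 1))) ∧
    (∑' z : ℕ, (z : ℝ) *
        ((z : ℝ) * a z * θ ^ (z - 1) * exp (-(α * ((z : ℝ) - 1) * H x)) /
          (∑' n : ℕ, (n : ℝ) * a n * (θ * exp (-α * H x)) ^ (n - 1)))
      = 1 + θ * exp (-α * H x) *
          (∑' n : ℕ, (n : ℝ) * ((n : ℝ) - 1) * a n * (θ * exp (-α * H x)) ^ (n - 2)) /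
          (∑' n : ℕ, (n : ℝ) * a n * (θ * exp (-α * H x)) ^ (n - 1))) := by
  simp_rw [mul_pow_pred_mul_exp_eq]
  have hy : 0 < θ * exp (-α * H x) := by positivity
  refine ⟨fun z hz => ?_, ?_⟩
  · obtain ⟨m, rfl⟩ := Nat.exists_eq_add_of_le' hz
    have hnum : α * ↑(m + 1) * a (m + 1) * θ ^ (m + 1) * h x * exp (-(α * ↑(m + 1) * H x)) =
        α * h x * (θ * exp (-α * H x)) * (↑(m + 1) * a (m + 1) * (θ * exp (-α * H x)) ^ m) := by
      linear_combination (α * ↑(m + 1) * a (m + 1) * h x) *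
        pow_mul_exp_neg_mul_nat_mul θ α (H x) (m + 1)
    have hden : θ * α * h x * exp (-α * H x) = α * h x * (θ * exp (-α * H x)) := by ring
    rw [div_div_div_cancel_right₀ hCθ.ne', hnum, hden, Nat.add_sub_cancel]
    exact mul_div_mul_left _ _ (by positivity)
  · have hE := (hasSum_mul_mul_pow_pred hsumCp.hasSum hsumCpp.hasSum).div_const
      (∑' n : ℕ, (n : ℝ) * a n * (θ * exp (-α * H x)) ^ (n - 1))
    simp_rw [← mul_div_assoc]
    rw [hE.tsum_eq, add_div, div_self hCp.ne', add_comm]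

/-- The conditional distribution of `N` given `X₍₁₎ = x` in the EWPS compounding
construction has pmf `g(z|x) = z a_z θ^{z-1} e^{-α(z-1)H(x)} / C'(θe^{-αH(x)})`
(the ratio of the joint density to the EWPS marginal), and its expectation is
`E[N | X₍₁₎ = x] = 1 + θ e^{-αH(x)} C''(θe^{-αH(x)})/C'(θe^{-αH(x)})`. -/
theorem ewps_conditional_N (H h : ℝ → ℝ) (a : ℕ → ℝ) (α θ : ℝ)
    (hα : 0 < α) (hθ : 0 < θ) (ha : ∀ n, 0 ≤ a n)
    (x : ℝ) (hx : 0 < x) (hhx : 0 < h x) (hHx : 0 ≤ H x)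
    (hCθ : 0 < ∑' n : ℕ, a n * θ ^ n)
    (hsumCp : Summable (fun n : ℕ => (n : ℝ) * a n * (θ * exp (-α * H x)) ^ (n - 1)))
    (hCp : 0 < ∑' n : ℕ, (n : ℝ) * a n * (θ * exp (-α * H x)) ^ (n - 1))
    (hsumCpp : Summable (fun n : ℕ =>
        (n : ℝ) * ((n : ℝ) - 1) * a n * (θ * exp (-α * H x)) ^ (n - 2))) :
    (∀ z : ℕ, 1 ≤ z →
      (α * z * a z * θ ^ z * h x * exp (-(α * z * H x)) / (∑' n : ℕ, a n * θ ^ n)) /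
        (θ * α * h x * exp (-α * H x) *
          (∑' n : ℕ, (n : ℝ) * a n * (θ * exp (-α * H x)) ^ (n - 1)) /
          (∑' n : ℕ, a n * θ ^ n))
      = (z : ℝ) * a z * θ ^ (z - 1) * exp (-(α * ((z : ℝ) - 1) * H x)) /
          (∑' n : ℕ, (n : ℝ) * a n * (θ * exp (-α * H x)) ^ (n - 1))) ∧
    (∑' z : ℕ, (z : ℝ) *
        ((z : ℝ) * a z * θ ^ (z - 1) * exp (-(α * ((z : ℝ) - 1) * H x)) /
          (∑' n : ℕ, (n : ℝ) * a n * (θ * exp (-α * H x)) ^ (n - 1)))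
      = 1 + θ * exp (-α * H x) *
          (∑' n : ℕ, (n : ℝ) * ((n : ℝ) - 1) * a n * (θ * exp (-α * H x)) ^ (n - 2)) /
          (∑' n : ℕ, (n : ℝ) * a n * (θ * exp (-α * H x)) ^ (n - 1))) :=
  ewps_conditional_N_general H h a α θ hα hθ x hhx hCθ hsumCp hCp hsumCpp
end
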